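/- Let R be a principal ideal domain and x a nonzero nonunit with prime factorization x = u·p₁^{a₁}···p_k^{a_k} (u a unit, a_i ≥ 1, the p_i pairwise non-associate primes). In the Macías topology on R \ {0}, the closure of {x} equals the intersection over i of ⟨p_i⟩ \ {0}. -/
import Mathlib

/-- For nonzero `k`, the basic set `σₖ⁰ = {s ≠ 0 : ⟨k⟩ + ⟨s⟩ = R}` of the Macías topology. -/
def sigma0 (R : Type*) [CommRing R] (k : R) : Set {x : R // x ≠ 0} :=
  {s | Ideal.span {k} + Ideal.span {s.1} = ⊤}

/-- The Macías topology on `R \ {0}`, generated by the sets `σₖ⁰` for `k ≠ 0`. -/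
def maciasTop (R : Type*) [CommRing R] : TopologicalSpace {x : R // x ≠ 0} :=
  TopologicalSpace.generateFrom {U | ∃ k : R, k ≠ 0 ∧ U = sigma0 R k}

lemma mem_sigma0_iff {R : Type*} [CommRing R] (k : R) (y : {x : R // x ≠ 0}) :
    y ∈ sigma0 R k ↔ IsCoprime k y.1 := by
  rw [sigma0, Set.mem_setOf_eq, Ideal.add_eq_sup, ← Ideal.isCoprime_iff_sup_eq,
    Ideal.isCoprime_span_singleton_iff]

theorem stmt17 (R : Type*) [CommRing R] [IsDomain R] [IsPrincipalIdealRing R]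
    (x : R) (hx : x ≠ 0) (hxu : ¬ IsUnit x)
    (n : ℕ) (u : Rˣ) (p : Fin n → R) (a : Fin n → ℕ)
    (hp : ∀ i, Prime (p i)) (ha : ∀ i, 1 ≤ a i)
    (hassoc : ∀ i j, i ≠ j → ¬ Associated (p i) (p j))
    (hfac : x = (u : R) * ∏ i, p i ^ a i) :
    @closure _ (maciasTop R) {(⟨x, hx⟩ : {x : R // x ≠ 0})} =
      ⋂ i, {y : {x : R // x ≠ 0} | p i ∣ y.1} := by
  letI : TopologicalSpace {x : R // x ≠ 0} := maciasTop R
  have hpi_dvd_x : ∀ i, p i ∣ x := by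
    intro i
    rw [hfac]
    exact Dvd.dvd.mul_left (dvd_trans (dvd_pow_self (p i) (Nat.one_le_iff_ne_zero.mp (ha i)))
      (Finset.dvd_prod_of_mem (fun i => p i ^ a i) (Finset.mem_univ i))) _
  ext y
  rw [mem_closure_iff, Set.mem_iInter]
  constructor
  · intro h i
    by_contra hdvd
    have hycop : IsCoprime (p i) y.1 := (hp i).coprime_iff_not_dvd.mpr hdvd
    have hopen : IsOpen (sigma0 R (p i)) :=
      TopologicalSpace.GenerateOpen.basic _ ⟨p i, (hp i).ne_zero, rfl⟩
    obtain ⟨z, hz1, hz2⟩ := h _ hopen ((mem_sigma0_iff _ _).mpr hycop)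
    rw [Set.mem_singleton_iff] at hz2
    subst hz2
    have : IsCoprime (p i) x := (mem_sigma0_iff _ _).mp hz1
    exact (hp i).not_unit (this.isUnit_of_dvd' dvd_rfl (hpi_dvd_x i))
  · intro h U hU hyU
    refine ⟨⟨x, hx⟩, ?_, Set.mem_singleton _⟩
    induction hU with
    | basic V hV =>
      obtain ⟨k, hk, rfl⟩ := hV
      rw [mem_sigma0_iff] at hyU ⊢
      show IsCoprime k x
      rw [hfac]
      refine (isCoprime_mul_unit_left_right u.isUnit _ _).mpr (IsCoprime.prod_right fun i _ => ?_)
      exact (hyU.of_isCoprime_of_dvd_right (h i)).pow_right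
    | univ => trivial
    | inter V W hV hW ihV ihW => exact ⟨ihV hyU.1, ihW hyU.2⟩
    | sUnion S hS ihS =>
      obtain ⟨V, hVS, hyV⟩ := hyU
      exact ⟨V, hVS, ihS V hVS hyV⟩
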